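/- Suppose P is a regular power series method and the Korovkin test hypotheses hold. Then there exists a subset E ⊆ ℕ with P-density δ_P(E) = 1 such that sup_{j∈E} ‖T_j‖ < ∞, where ‖T_j‖ = sup_{‖ψ‖=1} ‖T_j(ψ)‖ is the operator norm. -/

import Mathlib

open Filter Topology
open scoped ENNReal

/-- A power series method `P`: a sequence `(s j)` of nonnegative reals with `s 0 > 0`
whose power series `s(t) = ∑ s j * t ^ j` has radius of convergence `R`, `0 < R ≤ ∞`. -/
structure PowerSeriesMethod where
  s : ℕ → ℝ
  s_nonneg : ∀ j, 0 ≤ s j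
  s0_pos : 0 < s 0
  R : ℝ≥0∞
  R_pos : 0 < R
  summable_of_lt : ∀ t : ℝ, 0 < t → ENNReal.ofReal t < R → Summable fun j => s j * t ^ j
  not_summable_of_gt : ∀ t : ℝ, R < ENNReal.ofReal t → ¬ Summable fun j => s j * t ^ j

namespace PowerSeriesMethod

/-- The filter of `t` tending to `R` from the left (through `0 < t < R`);
if `R = ∞` this is `atTop`. -/
noncomputable def limFilter (P : PowerSeriesMethod) : Filter ℝ :=
  if P.R = ⊤ then Filter.atTop else nhdsWithin P.R.toReal (Set.Ioo 0 P.R.toReal)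

/-- `s(t) = ∑ s j t ^ j`. -/
noncomputable def sum (P : PowerSeriesMethod) (t : ℝ) : ℝ := ∑' j, P.s j * t ^ j

/-- The quotient `(∑_{j ∈ E} s j t ^ j) / s(t)` whose limit as `t → R⁻` is the `P`-density. -/
noncomputable def densityFn (P : PowerSeriesMethod) (E : Set ℕ) (t : ℝ) : ℝ :=
  (∑' j, Set.indicator E (fun j => P.s j * t ^ j) j) / P.sum t

/-- `E ⊆ ℕ` has `P`-density `d`. -/
def HasDensity (P : PowerSeriesMethod) (E : Set ℕ) (d : ℝ) : Prop :=
  Tendsto (P.densityFn E) P.limFilter (𝓝 d)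

/-- The power series method `P` is regular. -/
def Regular (P : PowerSeriesMethod) : Prop :=
  ∀ j, Tendsto (fun t => P.s j * t ^ j / P.sum t) P.limFilter (𝓝 0)

/-- The sequence `x` is `P`-statistically convergent to `L`. -/
def StatTendsto (P : PowerSeriesMethod) (x : ℕ → ℝ) (L : ℝ) : Prop :=
  ∀ ε : ℝ, 0 < ε → P.HasDensity {j | ε ≤ |x j - L|} 0

end PowerSeriesMethod

/-!
Take two distinct points `x₁ ≠ x₂`. The test function `h = Q_{x₁} + Q_{x₂}` is a linear
combination of the `ψ_λ` and is strictly positive, hence `h ≥ c > 0` by compactness. A positive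
operator is monotone, and `|f| ≤ (‖f‖ / c) h` gives `‖T_j f‖ ≤ ‖f‖ ‖T_j h‖ / c`. Finally
`‖T_j h‖` is bounded as soon as `‖T_j ψ_λ - ψ_λ‖ < 1` for every `λ`, which holds on the
complement of a finite union of sets of `P`-density zero, a set of `P`-density one.
-/

namespace PowerSeriesMethod

variable (P : PowerSeriesMethod)

theorem eventually_pos_and_ofReal_lt_R :
    ∀ᶠ t in P.limFilter, 0 < t ∧ ENNReal.ofReal t < P.R := by
  rw [limFilter]
  split_ifs with h
  · filter_upwards [eventually_gt_atTop (0 : ℝ)] with t ht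
    exact ⟨ht, h ▸ ENNReal.ofReal_lt_top⟩
  · filter_upwards [eventually_mem_nhdsWithin] with t ht
    exact ⟨ht.1, (ENNReal.ofReal_lt_iff_lt_toReal ht.1.le h).2 ht.2⟩

theorem term_nonneg {t : ℝ} (ht : 0 ≤ t) (j : ℕ) : 0 ≤ P.s j * t ^ j :=
  mul_nonneg (P.s_nonneg j) (pow_nonneg ht j)

theorem sum_pos {t : ℝ} (ht : 0 < t) (hR : ENNReal.ofReal t < P.R) : 0 < P.sum t := by
  have h0 : P.s 0 ≤ P.sum t := by
    simpa [sum] using (P.summable_of_lt t ht hR).le_tsum 0 fun j _ => P.term_nonneg ht.le j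
  exact P.s0_pos.trans_le h0

theorem densityFn_nonneg (E : Set ℕ) {t : ℝ} (ht : 0 < t) (hR : ENNReal.ofReal t < P.R) :
    0 ≤ P.densityFn E t :=
  div_nonneg (tsum_nonneg fun j => Set.indicator_apply_nonneg fun _ => P.term_nonneg ht.le j)
    (P.sum_pos ht hR).le

theorem densityFn_empty : P.densityFn ∅ = 0 := by
  ext t
  simp [densityFn]

theorem densityFn_compl (E : Set ℕ) {t : ℝ} (ht : 0 < t) (hR : ENNReal.ofReal t < P.R) :
    P.densityFn Eᶜ t = 1 - P.densityFn E t := by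
  have hs := P.summable_of_lt t ht hR
  have hsplit : (∑' j, E.indicator (fun j => P.s j * t ^ j) j) +
      ∑' j, Eᶜ.indicator (fun j => P.s j * t ^ j) j = P.sum t := by
    rw [← (hs.indicator E).tsum_add (hs.indicator Eᶜ)]
    exact tsum_congr fun j => Set.indicator_self_add_compl_apply E _ j
  have hpos := P.sum_pos ht hR
  rw [densityFn, densityFn, eq_sub_iff_add_eq, ← add_div, add_comm, hsplit, div_self hpos.ne']

theorem densityFn_union_le (E F : Set ℕ) {t : ℝ} (ht : 0 < t) (hR : ENNReal.ofReal t < P.R) :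
    P.densityFn (E ∪ F) t ≤ P.densityFn E t + P.densityFn F t := by
  have hs := P.summable_of_lt t ht hR
  rw [densityFn, densityFn, densityFn, ← add_div, ← (hs.indicator E).tsum_add (hs.indicator F)]
  refine div_le_div_of_nonneg_right ?_ (P.sum_pos ht hR).le
  refine (hs.indicator _).tsum_le_tsum (fun j => ?_) ((hs.indicator E).add (hs.indicator F))
  rw [← Set.indicator_union_add_inter_apply]
  exact le_add_of_nonneg_right (Set.indicator_apply_nonneg fun _ => P.term_nonneg ht.le j)

variable {P}

theorem HasDensity.compl {E : Set ℕ} {δ : ℝ} (h : P.HasDensity E δ) :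
    P.HasDensity Eᶜ (1 - δ) := by
  refine (tendsto_const_nhds.sub h).congr' ?_
  filter_upwards [P.eventually_pos_and_ofReal_lt_R] with t ht
  exact (P.densityFn_compl E ht.1 ht.2).symm

theorem hasDensity_zero_union {E F : Set ℕ} (hE : P.HasDensity E 0) (hF : P.HasDensity F 0) :
    P.HasDensity (E ∪ F) 0 := by
  refine squeeze_zero' ?_ ?_ (by simpa using hE.add hF)
  · filter_upwards [P.eventually_pos_and_ofReal_lt_R] with t ht
    exact P.densityFn_nonneg _ ht.1 ht.2
  · filter_upwards [P.eventually_pos_and_ofReal_lt_R] with t ht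
    exact P.densityFn_union_le E F ht.1 ht.2

theorem hasDensity_zero_iUnion {ι : Type*} [Finite ι] {E : ι → Set ℕ}
    (h : ∀ i, P.HasDensity (E i) 0) : P.HasDensity (⋃ i, E i) 0 := by
  classical
  have := Fintype.ofFinite ι
  suffices ∀ s : Finset ι, P.HasDensity (⋃ i ∈ s, E i) 0 by simpa using this Finset.univ
  intro s
  induction s using Finset.induction_on with
  | empty =>
    simp only [Finset.notMem_empty, Set.iUnion_of_empty, Set.iUnion_empty]
    rw [HasDensity, densityFn_empty]
    exact tendsto_const_nhds
  | insert i s _ ih => simpa only [Finset.set_biUnion_insert] using hasDensity_zero_union (h i) ih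

theorem hasDensity_setOf_forall_abs_sub_lt {ι : Type*} [Finite ι] {x : ι → ℕ → ℝ} {L : ι → ℝ}
    (hx : ∀ i, P.StatTendsto (x i) (L i)) {ε : ℝ} (hε : 0 < ε) :
    P.HasDensity {j | ∀ i, |x i j - L i| < ε} 1 := by
  have h := (hasDensity_zero_iUnion fun i => hx i ε hε).compl
  rw [sub_zero] at h
  convert h using 1
  ext j
  simp

end PowerSeriesMethod

section PositiveOperator

variable {X Y : Type*} [TopologicalSpace X] [CompactSpace X] [TopologicalSpace Y] [CompactSpace Y]

theorem ContinuousMap.exists_pos_le_of_forall_pos [Nonempty X] (h : C(X, ℝ))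
    (hpos : ∀ y, 0 < h y) : ∃ c > 0, ∀ y, c ≤ h y := by
  obtain ⟨y₀, -, hy₀⟩ := isCompact_univ.exists_isMinOn Set.univ_nonempty h.continuous.continuousOn
  exact ⟨h y₀, hpos y₀, fun y => hy₀ (Set.mem_univ y)⟩

theorem norm_apply_le_of_map_nonneg (T : C(X, ℝ) →ₗ[ℝ] C(Y, ℝ)) (hT : ∀ f, 0 ≤ f → 0 ≤ T f)
    {h : C(X, ℝ)} {c : ℝ} (hc : 0 < c) (hh : ∀ y, c ≤ h y) (f : C(X, ℝ)) :
    ‖T f‖ ≤ c⁻¹ * ‖T h‖ * ‖f‖ := by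
  have hmono : Monotone T := fun u v huv => by
    simpa [map_sub] using hT (v - u) (sub_nonneg.2 huv)
  set k := (c⁻¹ * ‖f‖) • h
  have hfk : ∀ y, |f y| ≤ k y := fun y => by
    have h1 : 1 ≤ c⁻¹ * h y := by rw [le_inv_mul_iff₀ hc, mul_one]; exact hh y
    calc |f y| ≤ ‖f‖ := by simpa using f.norm_coe_le_norm y
      _ ≤ ‖f‖ * (c⁻¹ * h y) := le_mul_of_one_le_right (norm_nonneg f) h1
      _ = k y := by simp only [k, ContinuousMap.smul_apply, smul_eq_mul]; ring
  have hlo : T (-k) ≤ T f := hmono (ContinuousMap.le_def.2 fun y => neg_le_of_abs_le (hfk y))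
  have hhi : T f ≤ T k := hmono (ContinuousMap.le_def.2 fun y => le_of_abs_le (hfk y))
  calc ‖T f‖ ≤ ‖T k‖ := (ContinuousMap.norm_le _ (norm_nonneg _)).2 fun y => by
        rw [Real.norm_eq_abs]
        refine (abs_le.2 ⟨by simpa using hlo y, hhi y⟩).trans ?_
        simpa using (le_abs_self _).trans ((T k).norm_coe_le_norm y)
    _ = c⁻¹ * ‖T h‖ * ‖f‖ := by
      rw [map_smul, norm_smul, Real.norm_of_nonneg (by positivity)]; ring

end PositiveOperator

theorem norm_map_sum_smul_le {𝕜 E : Type*} [NormedField 𝕜] [NormedAddCommGroup E]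
    [NormedSpace 𝕜 E] {ι : Type*} (s : Finset ι) (T : E →ₗ[𝕜] E) (a : ι → 𝕜) (v : ι → E) :
    ‖T (∑ i ∈ s, a i • v i)‖ ≤ ∑ i ∈ s, ‖a i‖ * (‖T (v i) - v i‖ + ‖v i‖) := by
  simp only [map_sum, map_smul]
  refine (norm_sum_le _ _).trans (Finset.sum_le_sum fun i _ => ?_)
  rw [norm_smul]
  gcongr
  simpa [add_comm] using norm_le_insert' (T (v i)) (v i)

theorem exists_forall_pos_sum_mul {X ι : Type*} [Nontrivial X] [Fintype ι] (ψ g : ι → X → ℝ)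
    (hQpos : ∀ x y, 0 ≤ ∑ l, g l x * ψ l y)
    (hQzero : ∀ x y, ∑ l, g l x * ψ l y = 0 → y = x) :
    ∃ a : ι → ℝ, ∀ y, 0 < ∑ l, a l * ψ l y := by
  obtain ⟨x₁, x₂, hx⟩ := exists_pair_ne X
  refine ⟨fun l => g l x₁ + g l x₂, fun y => ?_⟩
  simp only [add_mul, Finset.sum_add_distrib]
  by_contra! hle
  have h₁ := hQzero x₁ y (by linarith [hQpos x₁ y, hQpos x₂ y])
  have h₂ := hQzero x₂ y (by linarith [hQpos x₁ y, hQpos x₂ y])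
  exact hx (h₁.symm.trans h₂)

theorem exists_density_one_uniform_bound_general (P : PowerSeriesMethod)
    {X : Type*} [TopologicalSpace X] [CompactSpace X] [Nontrivial X]
    (d : ℕ) (ψ g : Fin d → C(X, ℝ))
    (hQpos : ∀ x y : X, 0 ≤ ∑ l, g l x * ψ l y)
    (hQzero : ∀ x y : X, (∑ l, g l x * ψ l y) = 0 ↔ y = x)
    (T : ℕ → C(X, ℝ) →ₗ[ℝ] C(X, ℝ))
    (hTpos : ∀ j (f : C(X, ℝ)), 0 ≤ f → 0 ≤ T j f)
    (hTconv : ∀ l, P.StatTendsto (fun j => ‖T j (ψ l) - ψ l‖) 0) :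
    ∃ E : Set ℕ, P.HasDensity E 1 ∧
      ∃ M : ℝ, ∀ j ∈ E, ∀ f : C(X, ℝ), ‖f‖ = 1 → ‖T j f‖ ≤ M := by
  obtain ⟨a, ha⟩ := exists_forall_pos_sum_mul (fun l => ψ l) (fun l => g l) hQpos
    fun x y => (hQzero x y).1
  set h : C(X, ℝ) := ∑ l, a l • ψ l
  obtain ⟨c, hc, hch⟩ := h.exists_pos_le_of_forall_pos fun y => by simpa [h] using ha y
  refine ⟨_, P.hasDensity_setOf_forall_abs_sub_lt hTconv one_pos,
    c⁻¹ * ∑ l, ‖a l‖ * (1 + ‖ψ l‖), fun j hj f hf => ?_⟩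
  have hjψ : ∀ l, ‖T j (ψ l) - ψ l‖ ≤ 1 := fun l => by simpa using (hj l).le
  calc ‖T j f‖ ≤ c⁻¹ * ‖T j h‖ * ‖f‖ := norm_apply_le_of_map_nonneg (T j) (hTpos j) hc hch f
    _ = c⁻¹ * ‖T j h‖ := by rw [hf, mul_one]
    _ ≤ c⁻¹ * ∑ l, ‖a l‖ * (1 + ‖ψ l‖) := by
      gcongr
      refine (norm_map_sum_smul_le _ (T j) a ψ).trans (Finset.sum_le_sum fun l _ => ?_)
      gcongr
      exact hjψ l

/-- under the Korovkin test hypotheses, there is a set `E` of `P`-density `1`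
on which the operator norms `‖T_j‖ = sup_{‖f‖ = 1} ‖T_j f‖` are uniformly bounded. -/
theorem exists_density_one_uniform_bound (P : PowerSeriesMethod) (hP : P.Regular)
    {X : Type*} [TopologicalSpace X] [CompactSpace X] [T2Space X] [Nontrivial X]
    (d : ℕ) (ψ g : Fin d → C(X, ℝ))
    (hQpos : ∀ x y : X, 0 ≤ ∑ l, g l x * ψ l y)
    (hQzero : ∀ x y : X, (∑ l, g l x * ψ l y) = 0 ↔ y = x)
    (T : ℕ → C(X, ℝ) →ₗ[ℝ] C(X, ℝ))
    (hTpos : ∀ j (f : C(X, ℝ)), 0 ≤ f → 0 ≤ T j f)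
    (hTconv : ∀ l, P.StatTendsto (fun j => ‖T j (ψ l) - ψ l‖) 0) :
    ∃ E : Set ℕ, P.HasDensity E 1 ∧
      ∃ M : ℝ, ∀ j ∈ E, ∀ f : C(X, ℝ), ‖f‖ = 1 → ‖T j f‖ ≤ M :=
  exists_density_one_uniform_bound_general P d ψ g hQpos hQzero T hTpos hTconv
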